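/- Let C be a multiset of k ≥ 1 roots of f = g·h (g(z)=∏_{α∈C}(z−α), h holomorphic nonvanishing near the relevant points). If m ∈ ℂ and r > 0 satisfy 8ek(|m−m_C| + r_C) ≤ r ≤ 1/(2γ(h,m)), then |f_k(m)|·r^k ≥ 4·Σ_{j=0}^{k−1}|f_j(m)|·r^j, where f_j = f^{(j)}/j!. -/

import Mathlib

open Complex Metric

def gammaSet (h : ℂ → ℂ) (z : ℂ) : Set ℝ :=
  {x | ∃ k : ℕ, 1 ≤ k ∧ x = ‖iteratedDeriv k h z / ((k.factorial : ℂ) * h z)‖ ^ ((1 : ℝ) / k)}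

/-!
Write `f = g * h` with `g = ∏_{α ∈ C} (X - α)`, so that by Leibniz the Taylor coefficients at `m`
are the Cauchy products `f_j = ∑_{i ≤ j} g_i h_{j-i}`. Re-expanded at `m`, `g` has coefficients
`g_i = e_{k-i}(m - α)`, elementary symmetric functions of numbers of modulus at most
`ρ = |m - m_C| + r_C`, so `|g_i| r^i ≤ 16^{-(k-i)} r^k` as soon as `16 k ρ ≤ r` (here `8e ≥ 16`),
while the definition of `γ` gives `|h_l| r^l ≤ 2^{-l} |h(m)|` as soon as `γ r ≤ 1/2`.
Since `g_k = 1`, the top coefficient satisfies `|f_k| r^k ≥ (30/31) |h(m)| r^k`, whereas geometric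
series give `|f_j| r^j ≤ (32/31) 16^{-(k-j)} |h(m)| r^k` for `j < k`, hence
`4 ∑_{j<k} |f_j| r^j ≤ (128/465) |h(m)| r^k`.
-/

open Finset Polynomial
open scoped Nat

section TaylorCoefficients

variable {𝕜 : Type*} [NontriviallyNormedField 𝕜] [CharZero 𝕜]

theorem iteratedDeriv_mul_div_factorial {F G : 𝕜 → 𝕜} {n : ℕ} {z : 𝕜}
    (hF : ContDiffAt 𝕜 n F z) (hG : ContDiffAt 𝕜 n G z) :
    iteratedDeriv n (fun x => F x * G x) z / n ! =
      ∑ i ∈ range (n + 1), iteratedDeriv i F z / i ! * (iteratedDeriv (n - i) G z / (n - i)!) := by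
  have := iteratedDerivWithin_mul (Set.mem_univ z) uniqueDiffOn_univ hF.contDiffWithinAt
    hG.contDiffWithinAt
  simp only [iteratedDerivWithin_univ] at this
  rw [show (fun x => F x * G x) = F * G from rfl, this, sum_div]
  refine sum_congr rfl fun i hi => ?_
  have hn : (n ! : 𝕜) ≠ 0 := Nat.cast_ne_zero.2 n.factorial_ne_zero
  rw [Nat.cast_choose 𝕜 (Nat.lt_succ_iff.mp (mem_range.mp hi))]
  field_simp

theorem Polynomial.iteratedDeriv_eval_div_factorial (p : 𝕜[X]) (n : ℕ) (z : 𝕜) :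
    iteratedDeriv n (fun x => p.eval x) z / n ! = (taylor z p).coeff n := by
  have : iteratedDeriv n (fun x => p.eval x) = fun x => (derivative^[n] p).eval x := by
    induction n with
    | zero => simp
    | succ n ih =>
      ext x
      rw [iteratedDeriv_succ, ih, Function.iterate_succ_apply', Polynomial.deriv]
  rw [this, taylor_coeff, ← factorial_smul_hasseDeriv]
  have hn : (n ! : 𝕜) ≠ 0 := Nat.cast_ne_zero.2 n.factorial_ne_zero
  simp [nsmul_eq_mul, hn]

end TaylorCoefficients

theorem Polynomial.taylor_prod_X_sub_C_coeff {R : Type*} [CommRing R] (s : Multiset R) (z : R)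
    {i : ℕ} (hi : i ≤ Multiset.card s) :
    (taylor z (s.map fun α => X - C α).prod).coeff i =
      (s.map fun α => z - α).esymm (Multiset.card s - i) := by
  have hshift : taylor z (s.map fun α => X - C α).prod = (s.map fun α => X + C (z - α)).prod := by
    rw [← taylorAlgHom_apply, map_multiset_prod, Multiset.map_map]
    congr 1
    refine Multiset.map_congr rfl fun α _ => ?_
    simp only [Function.comp_apply, taylorAlgHom_apply, map_sub, taylor_X, taylor_C]
    ring
  rw [hshift, Multiset.prod_X_add_C_coeff' s _ hi]

section NormBounds

variable {R : Type*} [NormedCommRing R] [NormOneClass R] {ρ : ℝ}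

theorem Multiset.norm_prod_le_pow_card {s : Multiset R} (hs : ∀ x ∈ s, ‖x‖ ≤ ρ) :
    ‖s.prod‖ ≤ ρ ^ Multiset.card s := by
  induction s using Multiset.induction with
  | empty => simp
  | cons a s ih =>
    have ha := hs a (Multiset.mem_cons_self a s)
    rw [Multiset.prod_cons, Multiset.card_cons, pow_succ']
    calc ‖a * s.prod‖ ≤ ‖a‖ * ‖s.prod‖ := norm_mul_le _ _
      _ ≤ ρ * ρ ^ Multiset.card s :=
        mul_le_mul ha (ih fun x hx => hs x (Multiset.mem_cons_of_mem hx)) (norm_nonneg _)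
          ((norm_nonneg a).trans ha)

theorem Multiset.norm_esymm_le {s : Multiset R} (hs : ∀ x ∈ s, ‖x‖ ≤ ρ) (t : ℕ) :
    ‖s.esymm t‖ ≤ (Multiset.card s).choose t * ρ ^ t := by
  rw [Multiset.esymm]
  refine (norm_multiset_sum_le _).trans ?_
  rw [Multiset.map_map]
  refine (Multiset.sum_le_card_nsmul _ (ρ ^ t) ?_).trans_eq ?_
  · simp only [Multiset.mem_map, Multiset.mem_powersetCard, Function.comp_apply]
    rintro _ ⟨u, ⟨hus, rfl⟩, rfl⟩
    exact Multiset.norm_prod_le_pow_card fun x hx => hs x (Multiset.mem_of_le hus hx)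
  · rw [Multiset.card_map, Multiset.card_powersetCard, nsmul_eq_mul]

end NormBounds

section RootClusters

variable {K : Type*} [NormedField K]

theorem norm_taylor_prod_X_sub_C_coeff_le {s : Multiset K} {z : K} {ρ : ℝ} (hρ : 0 ≤ ρ)
    (hs : ∀ α ∈ s, ‖z - α‖ ≤ ρ) {i : ℕ} (hi : i ≤ Multiset.card s) :
    ‖(taylor z (s.map fun α => X - C α).prod).coeff i‖ ≤
      (Multiset.card s * ρ) ^ (Multiset.card s - i) := by
  rw [taylor_prod_X_sub_C_coeff s z hi, mul_pow]
  refine (Multiset.norm_esymm_le (by simpa using hs) _).trans ?_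
  rw [Multiset.card_map]
  gcongr
  exact_mod_cast Nat.choose_le_pow _ _

theorem norm_taylor_prod_X_sub_C_coeff_mul_pow_le {s : Multiset K} {z : K} {ρ r : ℝ} (hρ : 0 ≤ ρ)
    (hs : ∀ α ∈ s, ‖z - α‖ ≤ ρ) (hρr : 16 * (Multiset.card s * ρ) ≤ r) {i : ℕ}
    (hi : i ≤ Multiset.card s) :
    ‖(taylor z (s.map fun α => X - C α).prod).coeff i‖ * r ^ i ≤
      (1 / 16) ^ (Multiset.card s - i) * r ^ Multiset.card s := by
  have hr : 0 ≤ r := (by positivity : (0 : ℝ) ≤ 16 * (Multiset.card s * ρ)).trans hρr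
  calc ‖(taylor z (s.map fun α => X - C α).prod).coeff i‖ * r ^ i
      ≤ (Multiset.card s * ρ) ^ (Multiset.card s - i) * r ^ i := by
        gcongr
        exact norm_taylor_prod_X_sub_C_coeff_le hρ hs hi
    _ ≤ (1 / 16 * r) ^ (Multiset.card s - i) * r ^ i := by gcongr ?_ ^ _ * _; linarith
    _ = (1 / 16) ^ (Multiset.card s - i) * r ^ Multiset.card s := by
        rw [mul_pow, mul_assoc, ← pow_add, Nat.sub_add_cancel hi]

end RootClusters

theorem gammaSet_nonneg_of_mem_upperBounds {h : ℂ → ℂ} {z : ℂ} {γ : ℝ}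
    (hγ : γ ∈ upperBounds (gammaSet h z)) : 0 ≤ γ :=
  (Real.rpow_nonneg (norm_nonneg _) _).trans (hγ ⟨1, le_rfl, rfl⟩)

theorem norm_iteratedDeriv_div_factorial_le_of_mem_upperBounds_gammaSet {h : ℂ → ℂ} {z : ℂ}
    (hz : h z ≠ 0) {γ : ℝ} (hγ : γ ∈ upperBounds (gammaSet h z)) (l : ℕ) :
    ‖iteratedDeriv l h z / (l ! : ℂ)‖ ≤ ‖h z‖ * γ ^ l := by
  rcases l.eq_zero_or_pos with rfl | hl
  · simp
  set y := ‖iteratedDeriv l h z / (l ! * h z)‖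
  have hy : y ≤ γ ^ l := by
    have hroot : y ^ ((1 : ℝ) / l) ≤ γ := hγ ⟨l, hl, rfl⟩
    calc y = (y ^ ((1 : ℝ) / l)) ^ l := by
          rw [← Real.rpow_natCast, ← Real.rpow_mul (norm_nonneg _), one_div,
            inv_mul_cancel₀ (by positivity), Real.rpow_one]
      _ ≤ γ ^ l := by gcongr
  calc ‖iteratedDeriv l h z / (l ! : ℂ)‖ = ‖h z‖ * y := by
        rw [← norm_mul]; congr 1; field_simp
    _ ≤ ‖h z‖ * γ ^ l := by gcongr

theorem norm_iteratedDeriv_div_factorial_mul_pow_le {h : ℂ → ℂ} {z : ℂ} (hz : h z ≠ 0) {γ r : ℝ}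
    (hγ : γ ∈ upperBounds (gammaSet h z)) (hr : 0 ≤ r) (hγr : γ * r ≤ 1 / 2) (l : ℕ) :
    ‖iteratedDeriv l h z / (l ! : ℂ)‖ * r ^ l ≤ (1 / 2) ^ l * ‖h z‖ := by
  have hγ0 := gammaSet_nonneg_of_mem_upperBounds hγ
  calc ‖iteratedDeriv l h z / (l ! : ℂ)‖ * r ^ l ≤ ‖h z‖ * γ ^ l * r ^ l := by
        gcongr
        exact norm_iteratedDeriv_div_factorial_le_of_mem_upperBounds_gammaSet hz hγ l
    _ = (γ * r) ^ l * ‖h z‖ := by ring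
    _ ≤ (1 / 2) ^ l * ‖h z‖ := by gcongr

theorem sum_range_pow_sub_le {c : ℝ} (h0 : 0 ≤ c) (h1 : c < 1) (n : ℕ) :
    ∑ i ∈ range n, c ^ (n - i) ≤ c / (1 - c) := by
  have hshift : ∑ i ∈ range n, c ^ (n - i) = ∑ i ∈ Ico 1 (n + 1), c ^ i := by
    rw [sum_Ico_eq_sum_range, Nat.add_sub_cancel, ← sum_range_reflect]
    refine sum_congr rfl fun i hi => ?_
    have := mem_range.1 hi
    congr 1
    omega
  simpa [hshift] using geom_sum_Ico_le_of_lt_one (m := 1) (n := n + 1) h0 h1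

namespace CauchyProduct

variable {R : Type*} [NormedRing R] {a b : ℕ → R} {k : ℕ} {r : ℝ}

theorem norm_term_mul_pow_le (hr : 0 ≤ r)
    (ha : ∀ i < k, ‖a i‖ * r ^ i ≤ (1 / 16) ^ (k - i) * r ^ k)
    (hb : ∀ l, ‖b l‖ * r ^ l ≤ (1 / 2) ^ l * ‖b 0‖) {i j : ℕ} (hij : i ≤ j) (hjk : j ≤ k)
    (hik : i < k) :
    ‖a i * b (j - i)‖ * r ^ j ≤ (1 / 16) ^ (k - j) * (1 / 32) ^ (j - i) * (r ^ k * ‖b 0‖) := by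
  calc ‖a i * b (j - i)‖ * r ^ j ≤ (‖a i‖ * r ^ i) * (‖b (j - i)‖ * r ^ (j - i)) := by
        rw [mul_mul_mul_comm, ← pow_add, Nat.add_sub_cancel' hij]
        gcongr
        exact norm_mul_le _ _
    _ ≤ ((1 / 16) ^ (k - i) * r ^ k) * ((1 / 2) ^ (j - i) * ‖b 0‖) :=
        mul_le_mul (ha i hik) (hb _) (by positivity) (by positivity)
    _ = (1 / 16) ^ (k - j) * (1 / 32) ^ (j - i) * (r ^ k * ‖b 0‖) := by
        rw [show k - i = (k - j) + (j - i) by omega, pow_add,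
          show (1 / 32 : ℝ) = 1 / 16 * (1 / 2) by norm_num, mul_pow]
        ring

theorem norm_coeff_mul_pow_le (hr : 0 ≤ r)
    (ha : ∀ i < k, ‖a i‖ * r ^ i ≤ (1 / 16) ^ (k - i) * r ^ k)
    (hb : ∀ l, ‖b l‖ * r ^ l ≤ (1 / 2) ^ l * ‖b 0‖) {j : ℕ} (hjk : j < k) :
    ‖∑ i ∈ range (j + 1), a i * b (j - i)‖ * r ^ j ≤
      32 / 31 * (1 / 16) ^ (k - j) * (r ^ k * ‖b 0‖) := by
  have hgeom : ∑ i ∈ range (j + 1), (1 / 32 : ℝ) ^ (j - i) ≤ 32 / 31 := by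
    rw [sum_range_succ, Nat.sub_self, pow_zero]
    linarith [sum_range_pow_sub_le (c := 1 / 32) (by norm_num) (by norm_num) j]
  calc ‖∑ i ∈ range (j + 1), a i * b (j - i)‖ * r ^ j
      ≤ ∑ i ∈ range (j + 1), ‖a i * b (j - i)‖ * r ^ j := by
        rw [← sum_mul]; gcongr; exact norm_sum_le _ _
    _ ≤ ∑ i ∈ range (j + 1), (1 / 16) ^ (k - j) * (1 / 32) ^ (j - i) * (r ^ k * ‖b 0‖) :=
        sum_le_sum fun i hi => norm_term_mul_pow_le hr ha hb (Nat.lt_succ_iff.1 (mem_range.1 hi))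
          hjk.le ((Nat.lt_succ_iff.1 (mem_range.1 hi)).trans_lt hjk)
    _ = (∑ i ∈ range (j + 1), (1 / 32 : ℝ) ^ (j - i)) * ((1 / 16) ^ (k - j) * (r ^ k * ‖b 0‖)) := by
        rw [sum_mul]; exact sum_congr rfl fun _ _ => by ring
    _ ≤ 32 / 31 * ((1 / 16) ^ (k - j) * (r ^ k * ‖b 0‖)) := by gcongr
    _ = 32 / 31 * (1 / 16) ^ (k - j) * (r ^ k * ‖b 0‖) := by ring

theorem le_norm_top_coeff_mul_pow (hr : 0 ≤ r)
    (ha : ∀ i < k, ‖a i‖ * r ^ i ≤ (1 / 16) ^ (k - i) * r ^ k)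
    (hb : ∀ l, ‖b l‖ * r ^ l ≤ (1 / 2) ^ l * ‖b 0‖) (hak : a k = 1) :
    30 / 31 * (r ^ k * ‖b 0‖) ≤ ‖∑ i ∈ range (k + 1), a i * b (k - i)‖ * r ^ k := by
  set S := ∑ i ∈ range k, a i * b (k - i)
  have hS : ‖S‖ * r ^ k ≤ 1 / 31 * (r ^ k * ‖b 0‖) :=
    calc ‖S‖ * r ^ k ≤ ∑ i ∈ range k, ‖a i * b (k - i)‖ * r ^ k := by
          rw [← sum_mul]; gcongr; exact norm_sum_le _ _
      _ ≤ ∑ i ∈ range k, (1 / 32 : ℝ) ^ (k - i) * (r ^ k * ‖b 0‖) :=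
          sum_le_sum fun i hi => by
            simpa using norm_term_mul_pow_le hr ha hb (mem_range.1 hi).le le_rfl (mem_range.1 hi)
      _ ≤ 1 / 31 * (r ^ k * ‖b 0‖) := by
          rw [← sum_mul]
          gcongr
          linarith [sum_range_pow_sub_le (c := 1 / 32) (by norm_num) (by norm_num) k]
  have hrev : ‖b 0‖ ≤ ‖S + b 0‖ + ‖S‖ := by
    simpa using norm_sub_le (S + b 0) S
  rw [sum_range_succ, Nat.sub_self, hak, one_mul]
  nlinarith [pow_nonneg hr k]

theorem four_mul_sum_norm_coeff_mul_pow_le (hr : 0 ≤ r)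
    (ha : ∀ i < k, ‖a i‖ * r ^ i ≤ (1 / 16) ^ (k - i) * r ^ k)
    (hb : ∀ l, ‖b l‖ * r ^ l ≤ (1 / 2) ^ l * ‖b 0‖) (hak : a k = 1) :
    4 * ∑ j ∈ range k, ‖∑ i ∈ range (j + 1), a i * b (j - i)‖ * r ^ j ≤
      ‖∑ i ∈ range (k + 1), a i * b (k - i)‖ * r ^ k := by
  calc 4 * ∑ j ∈ range k, ‖∑ i ∈ range (j + 1), a i * b (j - i)‖ * r ^ j
      ≤ 4 * ∑ j ∈ range k, 32 / 31 * (1 / 16) ^ (k - j) * (r ^ k * ‖b 0‖) := by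
        gcongr 4 * ?_
        exact sum_le_sum fun j hj => norm_coeff_mul_pow_le hr ha hb (mem_range.1 hj)
    _ = 128 / 31 * (∑ j ∈ range k, (1 / 16 : ℝ) ^ (k - j)) * (r ^ k * ‖b 0‖) := by
        simp only [mul_sum, sum_mul]; exact sum_congr rfl fun _ _ => by ring
    _ ≤ 128 / 31 * (1 / 15) * (r ^ k * ‖b 0‖) := by
        gcongr
        linarith [sum_range_pow_sub_le (c := 1 / 16) (by norm_num) (by norm_num) k]
    _ ≤ 30 / 31 * (r ^ k * ‖b 0‖) := by gcongr; norm_num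
    _ ≤ _ := le_norm_top_coeff_mul_pow hr ha hb hak

end CauchyProduct

theorem stmt11_general (C : Multiset ℂ) (k : ℕ) (hk : 1 ≤ k) (hcard : Multiset.card C = k)
    (mC : ℂ)
    (rC : ℝ) (hrC : ∀ α ∈ C, ‖α - mC‖ ≤ rC)
    (h f : ℂ → ℂ) (hdiff : Differentiable ℂ h)
    (hf : ∀ w, f w = (C.map (fun α => w - α)).prod * h w)
    (m : ℂ) (hm : h m ≠ 0) (γ : ℝ) (hγ : IsLUB (gammaSet h m) γ)
    (r : ℝ) (hr1 : 8 * Real.exp 1 * k * (‖m - mC‖ + rC) ≤ r) (hr2 : r ≤ 1 / (2 * γ)) :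
    4 * ∑ j ∈ Finset.range k, ‖iteratedDeriv j f m / (j.factorial : ℂ)‖ * r ^ j ≤
      ‖iteratedDeriv k f m / (k.factorial : ℂ)‖ * r ^ k := by
  subst hcard
  set P : ℂ[X] := (C.map fun α => X - Polynomial.C α).prod
  obtain ⟨α₀, hα₀⟩ := Multiset.card_pos_iff_exists_mem.1 hk
  have hρ : 0 ≤ ‖m - mC‖ + rC := add_nonneg (norm_nonneg _) ((norm_nonneg _).trans (hrC α₀ hα₀))
  have hdist (α : ℂ) (hα : α ∈ C) : ‖m - α‖ ≤ ‖m - mC‖ + rC :=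
    (norm_sub_le_norm_sub_add_norm_sub m mC α).trans (by rw [norm_sub_rev mC]; linarith [hrC α hα])
  have hr : 0 ≤ r := le_trans (by positivity) hr1
  have hρr : 16 * (Multiset.card C * (‖m - mC‖ + rC)) ≤ r := by
    nlinarith [Real.add_one_le_exp 1, mul_nonneg (Nat.cast_nonneg (Multiset.card C)) hρ]
  have hγr : γ * r ≤ 1 / 2 := by
    rcases (gammaSet_nonneg_of_mem_upperBounds hγ.1).eq_or_lt with hγ0 | hγ0
    · simp [← hγ0]
    · rw [le_div_iff₀ (by positivity)] at hr2; linarith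
  have hfP : f = fun w => P.eval w * h w := funext fun w => by
    simp [hf, P, eval_multiset_prod, Multiset.map_map]
  have hcoeff (j : ℕ) : iteratedDeriv j f m / j ! = ∑ i ∈ range (j + 1),
      (taylor m P).coeff i * (iteratedDeriv (j - i) h m / (j - i)!) := by
    rw [hfP, iteratedDeriv_mul_div_factorial P.differentiable.contDiff.contDiffAt
      hdiff.contDiff.contDiffAt]
    simp only [Polynomial.iteratedDeriv_eval_div_factorial]
  simp only [hcoeff]
  refine CauchyProduct.four_mul_sum_norm_coeff_mul_pow_le
    (b := fun l => iteratedDeriv l h m / (l ! : ℂ)) hr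
    (fun i hi => norm_taylor_prod_X_sub_C_coeff_mul_pow_le hρ hdist hρr hi.le)
    (fun l => by simpa using norm_iteratedDeriv_div_factorial_mul_pow_le hm hγ.1 hr hγr l) ?_
  simp [P, taylor_prod_X_sub_C_coeff C m le_rfl, Multiset.esymm]

theorem stmt11 (C : Multiset ℂ) (k : ℕ) (hk : 1 ≤ k) (hcard : Multiset.card C = k)
    (mC : ℂ) (hmC : mC = C.sum / (k : ℂ))
    (rC : ℝ) (hrC : ∀ α ∈ C, ‖α - mC‖ ≤ rC)
    (h f : ℂ → ℂ) (hdiff : Differentiable ℂ h)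
    (hf : ∀ w, f w = (C.map (fun α => w - α)).prod * h w)
    (m : ℂ) (hm : h m ≠ 0) (γ : ℝ) (hγ : IsLUB (gammaSet h m) γ)
    (r : ℝ) (hr1 : 8 * Real.exp 1 * k * (‖m - mC‖ + rC) ≤ r) (hr2 : r ≤ 1 / (2 * γ)) :
    4 * ∑ j ∈ Finset.range k, ‖iteratedDeriv j f m / (j.factorial : ℂ)‖ * r ^ j ≤
      ‖iteratedDeriv k f m / (k.factorial : ℂ)‖ * r ^ k :=
  stmt11_general C k hk hcard mC rC hrC h f hdiff hf m hm γ hγ r hr1 hr2
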